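/- Let γ ∈ C^∞(ℝ/ℤ, ℝ^n) be parametrized by arc-length (|γ'(x)| = 1 for all x). Then for every 0 < ε ≤ 1/2 and x, the tangential component of the truncated operator satisfies ⟨Q^εγ(x), γ'(x)⟩ = 4 ∫_{ε≤|w|≤1/2} ∫₀¹∫₀¹ (1−t)(−t) ⟨γ''(x+tw), γ''(x+stw)⟩ / w ds dt dw, where Q^εγ(x) := 2∫_{ε≤|w|≤1/2} (2(γ(x+w)−γ(x)−wγ'(x))/w² − γ''(x)) dw/w². -/

import Mathlib

/-!
Since `‖γ'‖ ≡ 1`, differentiating `⟪γ', γ'⟫` gives `⟪γ'', γ'⟫ ≡ 0`, so the `γ''(x)` term of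
`Q^ε` vanishes against `γ'(x)`. Taylor's formula with integral remainder gives
`⟪γ(x+w) - γ(x) - w γ'(x), γ'(x)⟫ = w² ∫₀¹ (1-t) ⟪γ''(x+tw), γ'(x)⟫ dt`, and by orthogonality at
`x + tw`,
`⟪γ''(x+tw), γ'(x)⟫ = ⟪γ''(x+tw), γ'(x) - γ'(x+tw)⟫ = -tw ∫₀¹ ⟪γ''(x+tw), γ''(x+stw)⟫ ds`.
-/

/-- The truncated operator `Q^ε` applied to `γ` at `x`. -/
noncomputable def Qtrunc {n : ℕ} (γ : ℝ → EuclideanSpace ℝ (Fin n)) (ε : ℝ) (x : ℝ) :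
    EuclideanSpace ℝ (Fin n) :=
  (2:ℝ) • ((∫ w in ε..(1/2:ℝ), (w^2)⁻¹ •
        ((2/w^2) • (γ (x+w) - γ x - w • deriv γ x) - iteratedDeriv 2 γ x)) +
      ∫ w in (-(1/2):ℝ)..(-ε), (w^2)⁻¹ •
        ((2/w^2) • (γ (x+w) - γ x - w • deriv γ x) - iteratedDeriv 2 γ x))

open intervalIntegral InnerProductSpace
open MeasureTheory (volume)

variable {E : Type*} [NormedAddCommGroup E] [InnerProductSpace ℝ E]

theorem intervalIntegral.integral_inner [CompleteSpace E] {f : ℝ → E} {a b : ℝ}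
    (hf : IntervalIntegrable f volume a b) (c : E) :
    ∫ x in a..b, ⟪c, f x⟫_ℝ = ⟪c, ∫ x in a..b, f x⟫_ℝ :=
  (innerSL ℝ c).intervalIntegral_comp_comm hf

section Segment

variable {f f' f'' : ℝ → E}

theorem hasDerivAt_comp_segment (hf : ∀ y, HasDerivAt f (f' y) y) (x h s : ℝ) :
    HasDerivAt (fun u => f (x + u * h)) (h • f' (x + s * h)) s := by
  simpa [Function.comp_def] using
    (hf (x + s * h)).scomp s (((hasDerivAt_id s).mul_const h).const_add x)

variable [CompleteSpace E]

theorem sub_eq_smul_integral_comp_segment (hf : ∀ y, HasDerivAt f (f' y) y)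
    (hf' : Continuous f') (x h : ℝ) :
    f (x + h) - f x = h • ∫ s in (0:ℝ)..1, f' (x + s * h) := by
  rw [← integral_smul, integral_eq_sub_of_hasDerivAt
    (fun s _ => hasDerivAt_comp_segment hf x h s)
    (by apply Continuous.intervalIntegrable; fun_prop)]
  simp

theorem taylor_two_integral_remainder (hf : ∀ y, HasDerivAt f (f' y) y)
    (hf' : ∀ y, HasDerivAt f' (f'' y) y) (hf'' : Continuous f'') (x h : ℝ) :
    f (x + h) - f x - h • f' x = h ^ 2 • ∫ t in (0:ℝ)..1, (1 - t) • f'' (x + t * h) := by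
  have hderiv : ∀ t ∈ Set.uIcc (0:ℝ) 1,
      HasDerivAt (fun u => (1 - u) • h • f' (x + u * h) + f (x + u * h))
        (h ^ 2 • (1 - t) • f'' (x + t * h)) t := fun t _ => by
    convert (((hasDerivAt_id' t).const_sub 1).fun_smul
      ((hasDerivAt_comp_segment hf' x h t).fun_const_smul h)).fun_add
      (hasDerivAt_comp_segment hf x h t) using 1
    module
  rw [← integral_smul, integral_eq_sub_of_hasDerivAt hderiv
    (by apply Continuous.intervalIntegrable; fun_prop)]
  simp only [sub_self, one_mul, zero_smul, zero_add, sub_zero, zero_mul, add_zero, one_smul]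
  module

end Segment

section Curve

variable {γ : ℝ → E}

theorem ContDiff.hasDerivAt_deriv_iteratedDeriv_two (hγ : ContDiff ℝ 2 γ) (y : ℝ) :
    HasDerivAt (deriv γ) (iteratedDeriv 2 γ y) y := by
  rw [iteratedDeriv_succ, iteratedDeriv_one]
  exact ((contDiff_succ_iff_deriv.mp hγ).2.2.differentiable one_ne_zero y).hasDerivAt

theorem inner_iteratedDeriv_two_deriv_eq_zero (hγ : ContDiff ℝ 2 γ) {c : ℝ}
    (hspeed : ∀ y, ‖deriv γ y‖ = c) (y : ℝ) :
    ⟪iteratedDeriv 2 γ y, deriv γ y⟫_ℝ = 0 := by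
  have hd := hγ.hasDerivAt_deriv_iteratedDeriv_two y
  have hsq : (fun y => ⟪deriv γ y, deriv γ y⟫_ℝ) = fun _ => c ^ 2 := by
    funext y
    rw [real_inner_self_eq_norm_sq, hspeed]
  have := (hd.inner ℝ hd).unique (hsq ▸ hasDerivAt_const y (c ^ 2))
  rw [real_inner_comm] at this
  linarith

variable [CompleteSpace E]

theorem inner_iteratedDeriv_two_deriv_eq_integral (hγ : ContDiff ℝ 2 γ)
    (horth : ∀ y, ⟪iteratedDeriv 2 γ y, deriv γ y⟫_ℝ = 0) (x h : ℝ) :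
    ⟪iteratedDeriv 2 γ (x + h), deriv γ x⟫_ℝ =
      -h * ∫ s in (0:ℝ)..1, ⟪iteratedDeriv 2 γ (x + h), iteratedDeriv 2 γ (x + s * h)⟫_ℝ := by
  have hsub := sub_eq_smul_integral_comp_segment hγ.hasDerivAt_deriv_iteratedDeriv_two
    (hγ.continuous_iteratedDeriv 2 le_rfl) x h
  have hback :
      deriv γ x = deriv γ (x + h) - h • ∫ s in (0:ℝ)..1, iteratedDeriv 2 γ (x + s * h) := by
    rw [← hsub, sub_sub_cancel]
  rw [hback, inner_sub_right, horth, real_inner_smul_right,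
    intervalIntegral.integral_inner (by apply Continuous.intervalIntegrable; fun_prop)]
  ring

variable (γ) in
noncomputable def QtruncIntegrand (x w : ℝ) : E :=
  (w ^ 2)⁻¹ • ((2 / w ^ 2) • (γ (x + w) - γ x - w • deriv γ x) - iteratedDeriv 2 γ x)

theorem inner_QtruncIntegrand_deriv (hγ : ContDiff ℝ 2 γ)
    (horth : ∀ y, ⟪iteratedDeriv 2 γ y, deriv γ y⟫_ℝ = 0) (x : ℝ) {w : ℝ} (hw : w ≠ 0) :
    ⟪QtruncIntegrand γ x w, deriv γ x⟫_ℝ =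
      2 * ∫ t in (0:ℝ)..1, ∫ s in (0:ℝ)..1,
        (1 - t) * (-t) * ⟪iteratedDeriv 2 γ (x + t * w), iteratedDeriv 2 γ (x + s * t * w)⟫_ℝ
          / w := by
  have htaylor := taylor_two_integral_remainder
    (fun y => (hγ.differentiable two_ne_zero y).hasDerivAt)
    hγ.hasDerivAt_deriv_iteratedDeriv_two (hγ.continuous_iteratedDeriv 2 le_rfl) x w
  have hint :
      IntervalIntegrable (fun t : ℝ => (1 - t) • iteratedDeriv 2 γ (x + t * w)) volume 0 1 := by
    apply Continuous.intervalIntegrable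
    have := hγ.continuous_iteratedDeriv 2 le_rfl
    fun_prop
  calc _ = 2 / w ^ 4 * ⟪deriv γ x, γ (x + w) - γ x - w • deriv γ x⟫_ℝ := by
        rw [QtruncIntegrand, real_inner_smul_left, inner_sub_left, real_inner_smul_left, horth,
          real_inner_comm]
        field_simp
        ring
    _ = 2 / w ^ 2 * ∫ t in (0:ℝ)..1, (1 - t) * ⟪iteratedDeriv 2 γ (x + t * w), deriv γ x⟫_ℝ := by
        rw [htaylor, real_inner_smul_right, ← intervalIntegral.integral_inner hint]
        simp only [real_inner_smul_right, real_inner_comm (deriv γ x)]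
        field_simp
    _ = _ := by
        rw [← integral_const_mul, ← integral_const_mul]
        refine integral_congr fun t _ => ?_
        simp only [inner_iteratedDeriv_two_deriv_eq_integral hγ horth, ← integral_const_mul]
        refine integral_congr fun s _ => ?_
        simp only [mul_assoc]
        field_simp

theorem inner_integral_QtruncIntegrand_deriv (hγ : ContDiff ℝ 2 γ)
    (horth : ∀ y, ⟪iteratedDeriv 2 γ y, deriv γ y⟫_ℝ = 0) (x : ℝ) {a b : ℝ}
    (h0 : (0:ℝ) ∉ Set.uIcc a b) :
    ⟪∫ w in a..b, QtruncIntegrand γ x w, deriv γ x⟫_ℝ =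
      2 * ∫ w in a..b, ∫ t in (0:ℝ)..1, ∫ s in (0:ℝ)..1,
        (1 - t) * (-t) * ⟪iteratedDeriv 2 γ (x + t * w), iteratedDeriv 2 γ (x + s * t * w)⟫_ℝ
          / w := by
  have hne : ∀ w ∈ Set.uIcc a b, w ^ 2 ≠ 0 := fun w hw hw0 =>
    h0 (pow_eq_zero_iff two_ne_zero |>.mp hw0 ▸ hw)
  have hint : IntervalIntegrable (QtruncIntegrand γ x) volume a b := by
    apply ContinuousOn.intervalIntegrable
    have := hγ.continuous
    unfold QtruncIntegrand
    fun_prop (disch := assumption)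
  rw [real_inner_comm, ← intervalIntegral.integral_inner hint, ← integral_const_mul]
  refine integral_congr fun w hw => ?_
  rw [real_inner_comm, inner_QtruncIntegrand_deriv hγ horth x fun hw0 => hne w hw (by simp [hw0])]

end Curve

theorem stmt14_general {n : ℕ} (γ : ℝ → EuclideanSpace ℝ (Fin n))
    (hγ : ContDiff ℝ (⊤ : ℕ∞) γ)
    (harc : ∀ x : ℝ, ‖deriv γ x‖ = 1)
    (ε : ℝ) (hε : 0 < ε) (hε' : ε ≤ 1/2) (x : ℝ) :
    (inner ℝ (Qtrunc γ ε x) (deriv γ x) : ℝ) =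
      4 * ((∫ w in ε..(1/2:ℝ), ∫ t in (0:ℝ)..1, ∫ s in (0:ℝ)..1,
          (1 - t) * (-t) *
            (inner ℝ (iteratedDeriv 2 γ (x + t*w)) (iteratedDeriv 2 γ (x + s*t*w)) : ℝ) / w) +
        ∫ w in (-(1/2):ℝ)..(-ε), ∫ t in (0:ℝ)..1, ∫ s in (0:ℝ)..1,
          (1 - t) * (-t) *
            (inner ℝ (iteratedDeriv 2 γ (x + t*w)) (iteratedDeriv 2 γ (x + s*t*w)) : ℝ) / w) := by
  have hγ2 : ContDiff ℝ 2 γ := hγ.of_le (WithTop.coe_le_coe.mpr le_top)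
  have horth := inner_iteratedDeriv_two_deriv_eq_zero hγ2 harc
  have h0pos : (0:ℝ) ∉ Set.uIcc ε (1/2) := by
    rw [Set.uIcc_of_le hε']
    exact fun h => h.1.not_gt hε
  have h0neg : (0:ℝ) ∉ Set.uIcc (-(1/2)) (-ε) := by
    rw [Set.uIcc_of_le (by linarith)]
    exact fun h => h.2.not_gt (neg_neg_of_pos hε)
  change ⟪(2:ℝ) • ((∫ w in ε..(1/2:ℝ), QtruncIntegrand γ x w) +
    ∫ w in (-(1/2):ℝ)..(-ε), QtruncIntegrand γ x w), deriv γ x⟫_ℝ = _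
  rw [real_inner_smul_left, inner_add_left, inner_integral_QtruncIntegrand_deriv hγ2 horth x h0pos,
    inner_integral_QtruncIntegrand_deriv hγ2 horth x h0neg]
  ring

/-- Tangential part of the truncated operator `Q^ε` for an arc-length parametrized smooth
periodic curve:
`⟨Q^εγ(x), γ'(x)⟩ = 4∫_{ε≤|w|≤1/2}∫₀¹∫₀¹ (1−t)(−t)⟨γ''(x+tw), γ''(x+stw)⟩/w ds dt dw`. -/
theorem stmt14 {n : ℕ} (γ : ℝ → EuclideanSpace ℝ (Fin n))
    (hγ : ContDiff ℝ (⊤ : ℕ∞) γ) (hper : Function.Periodic γ 1)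
    (harc : ∀ x : ℝ, ‖deriv γ x‖ = 1)
    (ε : ℝ) (hε : 0 < ε) (hε' : ε ≤ 1/2) (x : ℝ) :
    (inner ℝ (Qtrunc γ ε x) (deriv γ x) : ℝ) =
      4 * ((∫ w in ε..(1/2:ℝ), ∫ t in (0:ℝ)..1, ∫ s in (0:ℝ)..1,
          (1 - t) * (-t) *
            (inner ℝ (iteratedDeriv 2 γ (x + t*w)) (iteratedDeriv 2 γ (x + s*t*w)) : ℝ) / w) +
        ∫ w in (-(1/2):ℝ)..(-ε), ∫ t in (0:ℝ)..1, ∫ s in (0:ℝ)..1,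
          (1 - t) * (-t) *
            (inner ℝ (iteratedDeriv 2 γ (x + t*w)) (iteratedDeriv 2 γ (x + s*t*w)) : ℝ) / w) :=
  stmt14_general γ hγ harc ε hε hε' x
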